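/- arXiv:1910.03210 — 3 statements merged into one kernel-verified Lean document; each statement's English description precedes it below -/
import Mathlib

section
/- If N ≥ 1 and i is an index with 0 ≤ i, i+3 ≤ 4^N−1 and i mod 4 = 0, then i and i+3 lie in the same first-order subcurve (⌊i/4⌋ = ⌊(i+3)/4⌋), both are corner nodes, and the nodes h_N(i) and h_N(i+3) are edge connected. -/
/-- The `N`-th order approximated Hilbert curve, mapping indices `{0,...,4^N-1}`
to nodes of the grid `{0,...,2^N-1} × {0,...,2^N-1} ⊆ ℤ × ℤ`. -/
def hilbert : ℕ → ℕ → ℤ × ℤ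
  | 0, _ => (0, 0)
  | 1, i =>
    if i = 0 then (0, 0)
    else if i = 1 then (0, 1)
    else if i = 2 then (1, 1)
    else (1, 0)
  | N + 2, i =>
    let q := i / 4 ^ (N + 1)
    let s : ℤ := 2 ^ (N + 1)
    let p := hilbert (N + 1) (i % 4 ^ (N + 1))
    if q = 0 then (p.2, p.1)
    else if q = 1 then (p.1, p.2 + s)
    else if q = 2 then (p.1 + s, p.2 + s)
    else (2 * s - 1 - p.2, s - 1 - p.1)

/-- Euclidean distance between two points of `ℤ × ℤ`. -/
noncomputable def euclDist (a b : ℤ × ℤ) : ℝ :=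
  Real.sqrt (((a.1 - b.1 : ℤ) : ℝ) ^ 2 + ((a.2 - b.2 : ℤ) : ℝ) ^ 2)

/-- Two points of `ℤ × ℤ` are edge connected if their Euclidean distance equals 1. -/
def EdgeConnected (a b : ℤ × ℤ) : Prop := euclDist a b = 1

/-- Two points of `ℤ × ℤ` are vertex connected if both coordinates differ by exactly 1. -/
def VertexConnected (a b : ℤ × ℤ) : Prop := |a.1 - b.1| = 1 ∧ |a.2 - b.2| = 1

/-- Membership in the grid `{0,...,2^N-1} × {0,...,2^N-1}`. -/
def InGrid (N : ℕ) (p : ℤ × ℤ) : Prop :=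
  0 ≤ p.1 ∧ p.1 ≤ 2 ^ N - 1 ∧ 0 ≤ p.2 ∧ p.2 ≤ 2 ^ N - 1

/-- The closed segment from `u` to `v` (centres of cells, viewed in `ℝ²`) is disjoint
from the open unit cell centred at `c`. -/
def SegAvoidsCell (u v c : ℤ × ℤ) : Prop :=
  ∀ t : ℝ, t ∈ Set.Icc (0 : ℝ) 1 →
    ¬ (|(1 - t) * (u.1 : ℝ) + t * (v.1 : ℝ) - (c.1 : ℝ)| < 1 / 2 ∧
       |(1 - t) * (u.2 : ℝ) + t * (v.2 : ℝ) - (c.2 : ℝ)| < 1 / 2)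

/-- An evasion tour for the blocked index set `B` on the `N`-th order Hilbert grid:
a sequence of waypoints `w 0, ..., w m` in the grid, starting at the entry node,
ending at the exit node, avoiding all blocked nodes, covering every unblocked grid
point, and whose straight-line segments avoid the interiors of all blocked cells. -/
def IsEvasionTour (N : ℕ) (B : Finset ℕ) (m : ℕ) (w : ℕ → ℤ × ℤ) : Prop :=
  w 0 = hilbert N 0 ∧
  w m = hilbert N (4 ^ N - 1) ∧
  (∀ j ≤ m, InGrid N (w j)) ∧
  (∀ j ≤ m, ∀ b ∈ B, w j ≠ hilbert N b) ∧
  (∀ p : ℤ × ℤ, InGrid N p → (∀ b ∈ B, p ≠ hilbert N b) → ∃ j ≤ m, w j = p) ∧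
  (∀ j < m, ∀ b ∈ B, SegAvoidsCell (w j) (w (j + 1)) (hilbert N b))

/-!
Each quadrant of `h_(N+1)` is an isometric copy of `h_N` (a reflection or a translation of
it), and a block `{4k, …, 4k+3}` never straddles two quadrants since `4 ∣ 4^N`. Hence the
distance between `h_N(4k)` and `h_N(4k+3)` is inherited from `h_1`, where it is `1`.
-/

def sqDist (a b : ℤ × ℤ) : ℤ := (a.1 - b.1) ^ 2 + (a.2 - b.2) ^ 2

theorem edgeConnected_iff_sqDist_eq_one (a b : ℤ × ℤ) :
    EdgeConnected a b ↔ sqDist a b = 1 := by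
  rw [EdgeConnected, euclDist, Real.sqrt_eq_one, sqDist]
  exact_mod_cast Iff.rfl

def hilbertQuadrant (s : ℤ) (q : ℕ) (p : ℤ × ℤ) : ℤ × ℤ :=
  if q = 0 then (p.2, p.1)
  else if q = 1 then (p.1, p.2 + s)
  else if q = 2 then (p.1 + s, p.2 + s)
  else (2 * s - 1 - p.2, s - 1 - p.1)

theorem sqDist_hilbertQuadrant (s : ℤ) (q : ℕ) (a b : ℤ × ℤ) :
    sqDist (hilbertQuadrant s q a) (hilbertQuadrant s q b) = sqDist a b := by
  unfold hilbertQuadrant sqDist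
  split_ifs <;> ring

theorem hilbert_succ_succ (N i : ℕ) :
    hilbert (N + 2) i =
      hilbertQuadrant (2 ^ (N + 1)) (i / 4 ^ (N + 1)) (hilbert (N + 1) (i % 4 ^ (N + 1))) :=
  rfl

theorem Nat.mod_add_lt_of_dvd {d i j m : ℕ} (hdi : d ∣ i) (hdm : d ∣ m) (hj : j < d)
    (hm : 0 < m) : i % m + j < m := by
  obtain ⟨k, hk⟩ := (Nat.dvd_mod_iff hdm).mpr hdi
  obtain ⟨l, rfl⟩ := hdm
  have hkl : k < l := by
    by_contra! h
    have := Nat.mod_lt i hm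
    nlinarith
  nlinarith

theorem sqDist_hilbert_add_three (N i : ℕ) (hi : i + 3 < 4 ^ N) (hdvd : 4 ∣ i) :
    sqDist (hilbert N i) (hilbert N (i + 3)) = 1 := by
  induction N generalizing i with
  | zero => simp at hi
  | succ N ih =>
    cases N with
    | zero =>
      obtain rfl : i = 0 := by omega
      decide
    | succ M =>
      have hpos : 0 < 4 ^ (M + 1) := by positivity
      have hdvd_pow : 4 ∣ 4 ^ (M + 1) := dvd_pow_self 4 M.succ_ne_zero
      have hlt : i % 4 ^ (M + 1) + 3 < 4 ^ (M + 1) :=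
        Nat.mod_add_lt_of_dvd hdvd hdvd_pow (by norm_num) hpos
      have h3 : 3 % 4 ^ (M + 1) = 3 := Nat.mod_eq_of_lt (by omega)
      have hsum : i % 4 ^ (M + 1) + 3 % 4 ^ (M + 1) < 4 ^ (M + 1) := by rwa [h3]
      have hmod : (i + 3) % 4 ^ (M + 1) = i % 4 ^ (M + 1) + 3 := by
        rw [Nat.add_mod_of_add_mod_lt hsum, h3]
      have hdiv : (i + 3) / 4 ^ (M + 1) = i / 4 ^ (M + 1) := by
        rw [Nat.add_div_eq_of_add_mod_lt hsum, Nat.div_eq_of_lt (by omega : 3 < 4 ^ (M + 1)),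
          add_zero]
      rw [hilbert_succ_succ, hilbert_succ_succ, hdiv, hmod, sqDist_hilbertQuadrant]
      exact ih _ hlt ((Nat.dvd_mod_iff hdvd_pow).mpr hdvd)

theorem hilbert_mod4_zero_plus_three_general (N i : ℕ) (hi : i + 3 ≤ 4 ^ N - 1)
    (hmod : i % 4 = 0) :
    (i + 3) / 4 = i / 4 ∧
    i % 4 ∈ ({0, 3} : Set ℕ) ∧ (i + 3) % 4 ∈ ({0, 3} : Set ℕ) ∧
    EdgeConnected (hilbert N i) (hilbert N (i + 3)) := by
  refine ⟨by omega, by simp [hmod], by simp; omega, ?_⟩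
  rw [edgeConnected_iff_sqDist_eq_one]
  exact sqDist_hilbert_add_three N i (by omega) (Nat.dvd_of_mod_eq_zero hmod)

theorem hilbert_mod4_zero_plus_three (N i : ℕ) (hN : 1 ≤ N) (hi : i + 3 ≤ 4 ^ N - 1)
    (hmod : i % 4 = 0) :
    (i + 3) / 4 = i / 4 ∧
    i % 4 ∈ ({0, 3} : Set ℕ) ∧ (i + 3) % 4 ∈ ({0, 3} : Set ℕ) ∧
    EdgeConnected (hilbert N i) (hilbert N (i + 3)) :=
  hilbert_mod4_zero_plus_three_general N i hi hmod
end

section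
/- Validity of the even straight-node evasion strategy: if N ≥ 1 and i is a straight index with i even and 1 ≤ i ≤ 4^N−2, then i+3 ≤ 4^N−1 and the node h_N(i+3) is vertex connected to both h_N(i−1) and h_N(i+1); hence a blocked node at index i can be evaded by the detour h_N(i−1) → h_N(i+3) → h_N(i+1). -/
/-!
Every aligned block `4k, 4k+1, 4k+2, 4k+3` of the Hilbert curve traverses a unit square:
this holds for `h_1`, and each quadrant map of the recursion is an isometry of `ℤ × ℤ`
sending aligned blocks to aligned blocks. If `i ≡ 2 (mod 4)`, the curve turns at `i`
(at the corner `4k+2` of the square), so a straight even `i` is a multiple of `4`.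
Then `h(i-1)`, `h(i+1)` and `h(i+3)` are `h(i) - a`, `h(i) + a` and `h(i) + b` for
orthogonal unit steps `a`, `b`, and `b ∓ a` is a diagonal step.
-/

def IsUnitStep (a : ℤ × ℤ) : Prop := a = (1, 0) ∨ a = (-1, 0) ∨ a = (0, 1) ∨ a = (0, -1)

namespace IsUnitStep

variable {a b : ℤ × ℤ}

lemma swap (ha : IsUnitStep a) : IsUnitStep a.swap := by
  rcases ha with rfl | rfl | rfl | rfl <;> simp [IsUnitStep]

lemma neg (ha : IsUnitStep a) : IsUnitStep (-a) := by
  rcases ha with rfl | rfl | rfl | rfl <;> simp [IsUnitStep]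

lemma dot_self (ha : IsUnitStep a) : a.1 * a.1 + a.2 * a.2 = 1 := by
  rcases ha with rfl | rfl | rfl | rfl <;> simp

lemma vertexConnected_add (ha : IsUnitStep a) (hb : IsUnitStep b)
    (hab : a.1 * b.1 + a.2 * b.2 = 0) (p : ℤ × ℤ) : VertexConnected (p + b) (p + a) := by
  rcases ha with rfl | rfl | rfl | rfl <;> rcases hb with rfl | rfl | rfl | rfl <;>
    simp_all [VertexConnected]

end IsUnitStep

def IsUnitSquare (p₀ p₁ p₂ p₃ : ℤ × ℤ) : Prop :=
  ∃ a b : ℤ × ℤ, IsUnitStep a ∧ IsUnitStep b ∧ a.1 * b.1 + a.2 * b.2 = 0 ∧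
    p₁ = p₀ + a ∧ p₂ = p₀ + a + b ∧ p₃ = p₀ + b

namespace IsUnitSquare

variable {p₀ p₁ p₂ p₃ : ℤ × ℤ}

lemma swap (h : IsUnitSquare p₀ p₁ p₂ p₃) : IsUnitSquare p₀.swap p₁.swap p₂.swap p₃.swap := by
  obtain ⟨a, b, ha, hb, hab, rfl, rfl, rfl⟩ := h
  exact ⟨a.swap, b.swap, ha.swap, hb.swap, by simp only [Prod.fst_swap, Prod.snd_swap]; linarith,
    rfl, rfl, rfl⟩

lemma add_const (h : IsUnitSquare p₀ p₁ p₂ p₃) (c : ℤ × ℤ) :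
    IsUnitSquare (p₀ + c) (p₁ + c) (p₂ + c) (p₃ + c) := by
  obtain ⟨a, b, ha, hb, hab, rfl, rfl, rfl⟩ := h
  exact ⟨a, b, ha, hb, hab, by abel, by abel, by abel⟩

lemma const_sub (h : IsUnitSquare p₀ p₁ p₂ p₃) (c : ℤ × ℤ) :
    IsUnitSquare (c - p₀) (c - p₁) (c - p₂) (c - p₃) := by
  obtain ⟨a, b, ha, hb, hab, rfl, rfl, rfl⟩ := h
  exact ⟨-a, -b, ha.neg, hb.neg, by simp only [Prod.fst_neg, Prod.snd_neg]; linarith,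
    by abel, by abel, by abel⟩

lemma vertexConnected_of_straight {p : ℤ × ℤ} (h : IsUnitSquare p₀ p₁ p₂ p₃)
    (hstraight : p₁ - p₀ = p₀ - p) : VertexConnected p₃ p ∧ VertexConnected p₃ p₁ := by
  obtain ⟨a, b, ha, hb, hab, rfl, rfl, rfl⟩ := h
  have hp : p = p₀ + -a := by
    rw [add_sub_cancel_left] at hstraight
    rw [hstraight]
    abel
  rw [hp]
  exact ⟨ha.neg.vertexConnected_add hb (by simp only [Prod.fst_neg, Prod.snd_neg]; linarith) _,
    ha.vertexConnected_add hb hab _⟩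

lemma not_straight_at_corner (h : IsUnitSquare p₀ p₁ p₂ p₃) : p₃ - p₂ ≠ p₂ - p₁ := by
  obtain ⟨a, b, ha, hb, hab, rfl, rfl, rfl⟩ := h
  intro hstraight
  obtain rfl : b = -a := by simpa [eq_comm] using hstraight
  have := ha.dot_self
  simp only [Prod.fst_neg, Prod.snd_neg] at hab
  linarith

end IsUnitSquare

/-- The map placing a copy of `h_N` (with `s = 2^N`) in quadrant `q` of `h_{N+1}`. -/
def quadrantMap (s : ℤ) (q : ℕ) (p : ℤ × ℤ) : ℤ × ℤ :=
  if q = 0 then p.swap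
  else if q = 1 then p + (0, s)
  else if q = 2 then p + (s, s)
  else (2 * s - 1, s - 1) - p.swap

lemma IsUnitSquare.quadrantMap {p₀ p₁ p₂ p₃ : ℤ × ℤ} (h : IsUnitSquare p₀ p₁ p₂ p₃)
    (s : ℤ) (q : ℕ) :
    IsUnitSquare (quadrantMap s q p₀) (quadrantMap s q p₁) (quadrantMap s q p₂)
      (quadrantMap s q p₃) := by
  unfold _root_.quadrantMap
  split_ifs
  · exact h.swap
  · exact h.add_const _
  · exact h.add_const _
  · exact h.swap.const_sub _

lemma hilbert_add_two (N i : ℕ) :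
    hilbert (N + 2) i =
      quadrantMap (2 ^ (N + 1)) (i / 4 ^ (N + 1)) (hilbert (N + 1) (i % 4 ^ (N + 1))) := by
  simp only [hilbert, quadrantMap]
  split_ifs <;> ext <;> simp

lemma hilbert_isUnitSquare (N k : ℕ) (hk : 4 * k + 3 < 4 ^ N) :
    IsUnitSquare (hilbert N (4 * k)) (hilbert N (4 * k + 1)) (hilbert N (4 * k + 2))
      (hilbert N (4 * k + 3)) := by
  induction N generalizing k with
  | zero => omega
  | succ N ih =>
    cases N with
    | zero =>
      obtain rfl : k = 0 := by omega
      exact ⟨(0, 1), (1, 0), by simp [IsUnitStep], by simp [IsUnitStep], by simp,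
        by decide, by decide, by decide⟩
    | succ N =>
      have hpos : 0 < 4 ^ (N + 1) := by positivity
      obtain ⟨q, k', hdecomp, hk'⟩ :
          ∃ q k', 4 * k = 4 ^ (N + 1) * q + 4 * k' ∧ 4 * k' + 3 < 4 ^ (N + 1) := by
        have hmod := Nat.mod_add_div (4 * k) (4 ^ (N + 1))
        have hmod4 := Nat.mod_mod_of_dvd (4 * k) (dvd_pow_self 4 (by omega : N + 1 ≠ 0))
        have hlt := Nat.mod_lt (4 * k) hpos
        exact ⟨4 * k / 4 ^ (N + 1), 4 * k % 4 ^ (N + 1) / 4, by omega, by omega⟩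
      have hsplit : ∀ j < 4, hilbert (N + 2) (4 * k + j) =
          quadrantMap (2 ^ (N + 1)) q (hilbert (N + 1) (4 * k' + j)) := by
        intro j hj
        rw [hdecomp, add_assoc, hilbert_add_two, Nat.mul_add_div hpos, Nat.mul_add_mod,
          Nat.div_eq_of_lt (by omega), Nat.mod_eq_of_lt (by omega), add_zero]
      have h₀ := hsplit 0 (by norm_num)
      simp only [add_zero] at h₀
      have := (ih k' hk').quadrantMap (2 ^ (N + 1)) q
      rwa [← h₀, ← hsplit 1 (by norm_num), ← hsplit 2 (by norm_num),
        ← hsplit 3 (by norm_num)] at this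

theorem hilbert_straight_even_evasion_general (N i : ℕ) (hN : 1 ≤ N)
    (h2 : i ≤ 4 ^ N - 2) (heven : i % 2 = 0)
    (hstraight : hilbert N (i + 1) - hilbert N i = hilbert N i - hilbert N (i - 1)) :
    i + 3 ≤ 4 ^ N - 1 ∧
    VertexConnected (hilbert N (i + 3)) (hilbert N (i - 1)) ∧
    VertexConnected (hilbert N (i + 3)) (hilbert N (i + 1)) := by
  have hdvd : 4 ∣ 4 ^ N := dvd_pow_self 4 (by omega)
  have hpos : 0 < 4 ^ N := by positivity
  have hsq := hilbert_isUnitSquare N (i / 4) (by omega)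
  obtain hi | hi : i % 4 = 0 ∨ i % 4 = 2 := by omega
  · rw [show 4 * (i / 4) = i by omega] at hsq
    exact ⟨by omega, hsq.vertexConnected_of_straight hstraight⟩
  · rw [show 4 * (i / 4) + 1 = i - 1 by omega, show 4 * (i / 4) + 2 = i by omega,
      show 4 * (i / 4) + 3 = i + 1 by omega] at hsq
    exact absurd hstraight hsq.not_straight_at_corner

theorem hilbert_straight_even_evasion (N i : ℕ) (hN : 1 ≤ N) (h1 : 1 ≤ i)
    (h2 : i ≤ 4 ^ N - 2) (heven : i % 2 = 0)
    (hstraight : hilbert N (i + 1) - hilbert N i = hilbert N i - hilbert N (i - 1)) :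
    i + 3 ≤ 4 ^ N - 1 ∧
    VertexConnected (hilbert N (i + 3)) (hilbert N (i - 1)) ∧
    VertexConnected (hilbert N (i + 3)) (hilbert N (i + 1)) :=
  hilbert_straight_even_evasion_general N i hN h2 heven hstraight
end

section
/- Main theorem (a Hilbert curve with a hole of at most two blocked nodes can be covered): for every N ≥ 1 and every set B of blocked nodes with |B| ≤ 2 and 0 ∉ B and 4^N−1 ∉ B (the entry and exit nodes are available), an evasion tour exists; i.e., there is a finite sequence of waypoints starting at node h_N(0), ending at node h_N(4^N−1), visiting every node of the grid {0,...,2^N−1} × {0,...,2^N−1} except those in h_N(B), never visiting a blocked node, and such that no straight-line segment between consecutive waypoints passes through the interior of a blocked cell. -/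
/-! A king's move between two cells has its segment outside every other cell, so it suffices
to find a king's walk through all free cells from the entry `(0, 0)` to the exit. With at most
two cells removed, the king's graph on the grid stays connected: from a free cell other than
the origin one reaches a free cell with smaller `x + y`, because off the axes three such
neighbours are available, and on an axis the (at most two) blocked cells can be bypassed.
Concatenating walks between consecutive free cells gives the tour. The Hilbert curve enters
only through its injectivity, which keeps the entry and exit cells free. -/

open Relation

lemma half_lt_of_abs_lt {a b c t : ℝ} (hac : 1 ≤ |a - c|) (hab : |a - b| ≤ 1) (ht : 0 ≤ t)
    (h : |(1 - t) * a + t * b - c| < 1 / 2) : 1 / 2 < t := by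
  have hdev : |a - ((1 - t) * a + t * b)| ≤ t := by
    rw [show a - ((1 - t) * a + t * b) = t * (a - b) by ring, abs_mul, abs_of_nonneg ht]
    exact mul_le_of_le_one_right ht hab
  linarith [abs_sub_le a ((1 - t) * a + t * b) c]

def KingAdj (p q : ℤ × ℤ) : Prop := |p.1 - q.1| ≤ 1 ∧ |p.2 - q.2| ≤ 1

lemma KingAdj.symm {p q : ℤ × ℤ} (h : KingAdj p q) : KingAdj q p := by
  rw [KingAdj, abs_sub_comm, abs_sub_comm q.2]; exact h

lemma half_lt_of_kingAdj {u v c : ℤ × ℤ} (huv : KingAdj u v) (hcu : c ≠ u) {t : ℝ} (ht : 0 ≤ t)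
    (h₁ : |(1 - t) * (u.1 : ℝ) + t * (v.1 : ℝ) - (c.1 : ℝ)| < 1 / 2)
    (h₂ : |(1 - t) * (u.2 : ℝ) + t * (v.2 : ℝ) - (c.2 : ℝ)| < 1 / 2) : 1 / 2 < t := by
  have key : ∀ a b c : ℤ, a ≠ c → |a - b| ≤ 1 →
      |(1 - t) * (a : ℝ) + t * (b : ℝ) - (c : ℝ)| < 1 / 2 → 1 / 2 < t := fun a b c hac hab h =>
    half_lt_of_abs_lt (by exact_mod_cast Int.one_le_abs (sub_ne_zero.2 hac))
      (by exact_mod_cast hab) ht h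
  by_cases hc : u.1 = c.1
  · exact key u.2 v.2 c.2 (fun h => hcu (Prod.ext hc.symm h.symm)) huv.2 h₂
  · exact key u.1 v.1 c.1 hc huv.1 h₁

/-- At time `t` the moving point is within `t` of `u` and within `1 - t` of `v` in each
coordinate, while `c` differs from each of them by at least `1` in some coordinate. -/
lemma segAvoidsCell_of_kingAdj {u v c : ℤ × ℤ} (huv : KingAdj u v) (hcu : c ≠ u) (hcv : c ≠ v) :
    SegAvoidsCell u v c := by
  rintro t ⟨ht₀, ht₁⟩ ⟨h₁, h₂⟩
  have hu := half_lt_of_kingAdj huv hcu ht₀ h₁ h₂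
  have hv := half_lt_of_kingAdj huv.symm hcv (t := 1 - t) (by linarith)
    (by convert h₁ using 3; ring) (by convert h₂ using 3; ring)
  linarith

section KingGraph

variable {n : ℤ} {S : Finset (ℤ × ℤ)}

def Free (n : ℤ) (S : Finset (ℤ × ℤ)) (p : ℤ × ℤ) : Prop :=
  (0 ≤ p.1 ∧ p.1 ≤ n ∧ 0 ≤ p.2 ∧ p.2 ≤ n) ∧ p ∉ S

def FreeKingAdj (n : ℤ) (S : Finset (ℤ × ℤ)) (p q : ℤ × ℤ) : Prop :=
  KingAdj p q ∧ Free n S p ∧ Free n S q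

instance : Std.Symm (FreeKingAdj n S) where
  symm _ _ h := ⟨h.1.symm, h.2.2, h.2.1⟩

lemma exists_mem_notMem_of_card_le_two (hS : S.card ≤ 2) {a b c : ℤ × ℤ}
    (hab : a ≠ b) (hac : a ≠ c) (hbc : b ≠ c) : ∃ q ∈ ({a, b, c} : Finset (ℤ × ℤ)), q ∉ S :=
  Finset.exists_mem_notMem_of_card_lt_card <|
    hS.trans_lt (by rw [Finset.card_eq_three.2 ⟨a, b, c, hab, hac, hbc, rfl⟩]; norm_num)

lemma exists_freeKingAdj_of_pos (hS : S.card ≤ 2) {x y : ℤ} (hp : Free n S (x, y))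
    (hx : 0 < x) (hy : 0 < y) : ∃ q, FreeKingAdj n S (x, y) q ∧ q.1 + q.2 < x + y := by
  obtain ⟨q, hq, hqS⟩ := exists_mem_notMem_of_card_le_two hS (a := (x - 1, y)) (b := (x, y - 1))
    (c := (x - 1, y - 1)) (by simp only [Ne, Prod.ext_iff]; omega)
    (by simp only [Ne, Prod.ext_iff]; omega) (by simp only [Ne, Prod.ext_iff]; omega)
  have ⟨⟨_, _, _, _⟩, _⟩ := hp
  simp only [Finset.mem_insert, Finset.mem_singleton] at hq
  rcases hq with rfl | rfl | rfl <;>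
    exact ⟨_, ⟨by simp only [KingAdj, abs_le]; omega, hp, ⟨by dsimp only; omega, hqS⟩⟩,
      by dsimp only; omega⟩

lemma free_of_reflTransGen {p q : ℤ × ℤ} (hp : Free n S p)
    (h : ReflTransGen (FreeKingAdj n S) p q) : Free n S q := by
  rcases h.cases_tail with rfl | ⟨_, _, h⟩
  exacts [hp, h.2.2]

lemma exists_reflTransGen_of_snd_eq_zero (hS : S.card ≤ 2) (h₀ : ((0 : ℤ), (0 : ℤ)) ∉ S)
    {x : ℤ} (hp : Free n S (x, 0)) (hx : 0 < x) :
    ∃ q, q.1 + q.2 < x ∧ ReflTransGen (FreeKingAdj n S) (x, 0) q := by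
  have ⟨⟨_, _, _, _⟩, _⟩ := hp
  by_cases hA : (x - 1, (0 : ℤ)) ∈ S
  swap
  · exact ⟨_, by dsimp only; omega,
      .single ⟨by simp only [KingAdj, abs_le]; omega, hp, ⟨by dsimp only; omega, hA⟩⟩⟩
  have hx₂ : 2 ≤ x := by
    by_contra
    obtain rfl : x = 1 := by omega
    exact h₀ (by simpa using hA)
  by_cases hB : (x - 1, (1 : ℤ)) ∈ S
  · -- `S` is exactly the two cells left of `(x, 0)`: go around them via `(x, 1)` and `(x - 1, 2)`
    obtain rfl : S = {(x - 1, 0), (x - 1, 1)} := (Finset.eq_of_subset_of_card_le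
      (by simp [Finset.insert_subset_iff, hA, hB]) (by rwa [Finset.card_pair (by simp)])).symm
    have free : ∀ a b : ℤ, 0 ≤ a → a ≤ n → 0 ≤ b → b ≤ n → (a ≠ x - 1 ∨ 2 ≤ b) →
        Free n {(x - 1, 0), (x - 1, 1)} (a, b) := fun a b _ _ _ _ hab =>
      ⟨by dsimp only; omega,
        by simp only [Finset.mem_insert, Finset.mem_singleton, Prod.ext_iff]; omega⟩
    refine ⟨(x - 2, 1), by dsimp only; omega, .head ⟨?_, hp, free x 1 ?_ ?_ ?_ ?_ ?_⟩ <|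
      .head ⟨?_, free x 1 ?_ ?_ ?_ ?_ ?_, free (x - 1) 2 ?_ ?_ ?_ ?_ ?_⟩ <|
      .single ⟨?_, free (x - 1) 2 ?_ ?_ ?_ ?_ ?_, free (x - 2) 1 ?_ ?_ ?_ ?_ ?_⟩⟩ <;>
    first | (simp only [KingAdj, abs_le]; omega) | omega
  · have hB' : Free n S (x - 1, 1) := ⟨by dsimp only; omega, hB⟩
    obtain ⟨q, hq, hlt⟩ := exists_freeKingAdj_of_pos hS hB' (by omega) one_pos
    exact ⟨q, by omega, .head ⟨by simp only [KingAdj, abs_le]; omega, hp, hB'⟩ (.single hq)⟩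

lemma free_map_prodComm {p : ℤ × ℤ} :
    Free n (S.map (Equiv.prodComm ℤ ℤ).toEmbedding) p ↔ Free n S p.swap := by
  simp only [Free, Finset.mem_map_equiv, Equiv.prodComm_symm, Equiv.prodComm_apply,
    Prod.fst_swap, Prod.snd_swap]
  tauto

lemma freeKingAdj_map_prodComm {p q : ℤ × ℤ} :
    FreeKingAdj n (S.map (Equiv.prodComm ℤ ℤ).toEmbedding) p q ↔
      FreeKingAdj n S p.swap q.swap := by
  simp only [FreeKingAdj, KingAdj, free_map_prodComm, Prod.fst_swap, Prod.snd_swap]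
  tauto

lemma exists_reflTransGen_lt (hS : S.card ≤ 2) (h₀ : ((0 : ℤ), (0 : ℤ)) ∉ S) {p : ℤ × ℤ}
    (hp : Free n S p) (hne : p ≠ (0, 0)) :
    ∃ q, q.1 + q.2 < p.1 + p.2 ∧ ReflTransGen (FreeKingAdj n S) p q := by
  obtain ⟨x, y⟩ := p
  have ⟨⟨_, _, _, _⟩, _⟩ := hp
  by_cases hy : y = 0
  · subst hy
    simpa using exists_reflTransGen_of_snd_eq_zero hS h₀ hp (by simp_all; omega)
  by_cases hx : x = 0
  · -- on the other axis, transpose the picture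
    subst hx
    obtain ⟨q, hlt, hq⟩ :=
      exists_reflTransGen_of_snd_eq_zero (S := S.map (Equiv.prodComm ℤ ℤ).toEmbedding)
      (by rwa [Finset.card_map]) (by simpa [Finset.mem_map_equiv] using h₀)
      (free_map_prodComm.2 hp) (by omega)
    exact ⟨q.swap, by simpa [add_comm] using hlt,
      hq.lift Prod.swap fun _ _ h => freeKingAdj_map_prodComm.1 h⟩
  obtain ⟨q, hq, hlt⟩ := exists_freeKingAdj_of_pos hS hp (by omega) (by omega)
  exact ⟨q, hlt, .single hq⟩

lemma reflTransGen_freeKingAdj_zero (hS : S.card ≤ 2) (h₀ : ((0 : ℤ), (0 : ℤ)) ∉ S) {p : ℤ × ℤ}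
    (hp : Free n S p) : ReflTransGen (FreeKingAdj n S) p (0, 0) := by
  induction hk : (p.1 + p.2).toNat using Nat.strong_induction_on generalizing p with
  | _ k ih =>
    by_cases hne : p = (0, 0)
    · exact hne ▸ .refl
    obtain ⟨q, hlt, hpq⟩ := exists_reflTransGen_lt hS h₀ hp hne
    have hq := free_of_reflTransGen hp hpq
    have ⟨⟨_, _, _, _⟩, _⟩ := hq
    exact hpq.trans (ih _ (by omega) hq rfl)

lemma reflTransGen_freeKingAdj (hS : S.card ≤ 2) (h₀ : ((0 : ℤ), (0 : ℤ)) ∉ S) {p q : ℤ × ℤ}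
    (hp : Free n S p) (hq : Free n S q) : ReflTransGen (FreeKingAdj n S) p q :=
  (reflTransGen_freeKingAdj_zero hS h₀ hp).trans
    (Std.Symm.symm _ _ (reflTransGen_freeKingAdj_zero hS h₀ hq))

end KingGraph

section Walk

variable {α : Type*} {r : α → α → Prop}

def IsWalk (r : α → α → Prop) (m : ℕ) (w : ℕ → α) : Prop := ∀ j < m, r (w j) (w (j + 1))

lemma exists_isWalk_of_reflTransGen {a b : α} (h : ReflTransGen r a b) :
    ∃ m w, w 0 = a ∧ w m = b ∧ IsWalk r m w := by
  induction h with
  | refl => exact ⟨0, fun _ => a, rfl, rfl, fun _ h => absurd h (Nat.not_lt_zero _)⟩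
  | @tail b c _ hbc ih =>
    obtain ⟨m, w, h₀, hm, hw⟩ := ih
    refine ⟨m + 1, Function.update w (m + 1) c, by simp [h₀], by simp, fun j hj => ?_⟩
    rcases (Nat.lt_succ_iff.1 hj).lt_or_eq with hj | rfl
    · simpa [Function.update_of_ne, hj.ne, (Nat.lt_succ_of_lt hj).ne] using hw j hj
    · simpa [Function.update_of_ne, hm] using hbc

lemma IsWalk.append {m₁ m₂ : ℕ} {w₁ w₂ : ℕ → α} (h₁ : IsWalk r m₁ w₁) (h₂ : IsWalk r m₂ w₂)
    (h : w₁ m₁ = w₂ 0) : ∃ w, IsWalk r (m₁ + m₂) w ∧ (∀ j ≤ m₁, w j = w₁ j) ∧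
      ∀ j ≤ m₂, w (m₁ + j) = w₂ j := by
  refine ⟨fun j => if j ≤ m₁ then w₁ j else w₂ (j - m₁), fun j hj => ?_,
    fun j hj => if_pos hj, fun j _ => ?_⟩
  · rcases lt_trichotomy j m₁ with hj₁ | rfl | hj₁
    · simpa [hj₁.le, Nat.succ_le_of_lt hj₁] using h₁ j hj₁
    · simpa [h] using h₂ 0 (by omega)
    · simpa [hj₁.not_ge, (Nat.lt_succ_of_lt hj₁).not_ge, Nat.sub_add_comm hj₁.le] using
        h₂ (j - m₁) (by omega)
  · rcases j.eq_zero_or_pos with rfl | hj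
    · simp [h]
    · simp [show ¬m₁ + j ≤ m₁ by omega]

lemma exists_isWalk_covering {P : α → Prop} (hconn : ∀ x y, P x → P y → ReflTransGen r x y)
    (s : Finset α) (hs : ∀ q ∈ s, P q) {a b : α} (ha : P a) (hb : P b) :
    ∃ m w, w 0 = a ∧ w m = b ∧ IsWalk r m w ∧ ∀ q ∈ s, ∃ j ≤ m, w j = q := by
  classical
  induction s using Finset.induction_on generalizing a with
  | empty =>
    obtain ⟨m, w, h₀, hm, hw⟩ := exists_isWalk_of_reflTransGen (hconn a b ha hb)
    exact ⟨m, w, h₀, hm, hw, by simp⟩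
  | insert q s _ ih =>
    have hq := hs q (Finset.mem_insert_self q s)
    obtain ⟨m₁, w₁, h₀₁, hm₁, hw₁⟩ := exists_isWalk_of_reflTransGen (hconn a q ha hq)
    obtain ⟨m₂, w₂, h₀₂, hm₂, hw₂, hcover⟩ :=
      ih (fun x hx => hs x (Finset.mem_insert_of_mem hx)) hq
    obtain ⟨w, hw, hw₁', hw₂'⟩ := hw₁.append hw₂ (hm₁.trans h₀₂.symm)
    refine ⟨m₁ + m₂, w, by rw [hw₁' 0 (Nat.zero_le _), h₀₁], by rw [hw₂' m₂ le_rfl, hm₂], hw, ?_⟩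
    simp only [Finset.mem_insert, forall_eq_or_imp]
    refine ⟨⟨m₁, by omega, by rw [hw₁' m₁ le_rfl, hm₁]⟩, fun x hx => ?_⟩
    obtain ⟨j, hj, rfl⟩ := hcover x hx
    exact ⟨m₁ + j, by omega, hw₂' j hj⟩

end Walk

lemma hilbert_zero : ∀ N, hilbert N 0 = (0, 0)
  | 0 | 1 => rfl
  | N + 2 => by simp [hilbert, hilbert_zero (N + 1)]

lemma hilbert_inGrid : ∀ N i, InGrid N (hilbert N i)
  | 0, _ => by simp [hilbert, InGrid]
  | 1, i => by unfold hilbert; split_ifs <;> simp [InGrid]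
  | N + 2, i => by
    obtain ⟨_, _, _, _⟩ := hilbert_inGrid (N + 1) (i % 4 ^ (N + 1))
    have : (2 : ℤ) ^ (N + 2) = 2 * 2 ^ (N + 1) := by ring
    simp only [hilbert, InGrid, this]
    split_ifs <;> dsimp only <;> omega

/-- The curve visits the four quadrants in turn, so the quadrant of `hilbert (N + 2) i`
determines `i / 4 ^ (N + 1)`. -/
lemma hilbert_injOn : ∀ N, Set.InjOn (hilbert N) (Set.Iio (4 ^ N))
  | 0 => fun i hi j hj _ => by simp_all
  | 1 => fun i hi j hj h => by
    simp only [Set.mem_Iio, pow_one] at hi hj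
    interval_cases i <;> interval_cases j <;> simp_all [hilbert]
  | N + 2 => fun i hi j hj h => by
    have hs : 0 < 4 ^ (N + 1) := by positivity
    have hi₄ : i / 4 ^ (N + 1) < 4 := Nat.div_lt_of_lt_mul (by rw [← pow_succ]; exact hi)
    have hj₄ : j / 4 ^ (N + 1) < 4 := Nat.div_lt_of_lt_mul (by rw [← pow_succ]; exact hj)
    obtain ⟨_, _, _, _⟩ := hilbert_inGrid (N + 1) (i % 4 ^ (N + 1))
    obtain ⟨_, _, _, _⟩ := hilbert_inGrid (N + 1) (j % 4 ^ (N + 1))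
    have key : i / 4 ^ (N + 1) = j / 4 ^ (N + 1) ∧
        hilbert (N + 1) (i % 4 ^ (N + 1)) = hilbert (N + 1) (j % 4 ^ (N + 1)) := by
      simp only [hilbert] at h
      generalize i / 4 ^ (N + 1) = a at *
      generalize j / 4 ^ (N + 1) = b at *
      generalize hilbert (N + 1) (i % 4 ^ (N + 1)) = p at *
      generalize hilbert (N + 1) (j % 4 ^ (N + 1)) = p' at *
      rw [Prod.ext_iff]
      split_ifs at h <;> rw [Prod.mk.injEq] at h <;> omega
    have hr := hilbert_injOn (N + 1) (Nat.mod_lt i hs) (Nat.mod_lt j hs) key.2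
    rw [← Nat.div_add_mod i (4 ^ (N + 1)), ← Nat.div_add_mod j (4 ^ (N + 1)), key.1, hr]

lemma free_image_hilbert_iff {N : ℕ} {B : Finset ℕ} {p : ℤ × ℤ} :
    Free (2 ^ N - 1) (B.image (hilbert N)) p ↔ InGrid N p ∧ ∀ b ∈ B, p ≠ hilbert N b := by
  simp only [Free, InGrid, Finset.mem_image, not_exists, not_and, ne_comm]

theorem hilbert_evade_at_most_two_blocked_general (N : ℕ) (B : Finset ℕ)
    (hcard : B.card ≤ 2) (hB : ∀ b ∈ B, b < 4 ^ N) (h0 : 0 ∉ B)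
    (hlast : 4 ^ N - 1 ∉ B) :
    ∃ (m : ℕ) (w : ℕ → ℤ × ℤ), IsEvasionTour N B m w := by
  classical
  set S := B.image (hilbert N)
  have hfree : ∀ i < 4 ^ N, i ∉ B → Free (2 ^ N - 1) S (hilbert N i) := fun i hi hiB =>
    free_image_hilbert_iff.2
      ⟨hilbert_inGrid N i, fun b hb he => hiB (hilbert_injOn N hi (hB b hb) he ▸ hb)⟩
  have hstart := hfree 0 (by positivity) h0
  have hend := hfree _ (Nat.sub_lt (by positivity) one_pos) hlast
  obtain ⟨m, w, hw₀, hwm, hw, hcover⟩ := exists_isWalk_covering (P := Free (2 ^ N - 1) S)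
    (fun _ _ => reflTransGen_freeKingAdj (Finset.card_image_le.trans hcard)
      (hilbert_zero N ▸ hstart.2))
    ((Finset.Icc 0 (2 ^ N - 1) ×ˢ Finset.Icc 0 (2 ^ N - 1)).filter (Free _ S))
    (fun q hq => (Finset.mem_filter.1 hq).2) hstart hend
  have hwfree : ∀ j ≤ m, InGrid N (w j) ∧ ∀ b ∈ B, w j ≠ hilbert N b := fun j hj => by
    rcases hj.lt_or_eq with hj | rfl
    exacts [free_image_hilbert_iff.1 (hw j hj).2.1, free_image_hilbert_iff.1 (hwm ▸ hend)]
  refine ⟨m, w, hw₀, hwm, fun j hj => (hwfree j hj).1, fun j hj => (hwfree j hj).2,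
    fun p hp hpB => hcover p ?_, fun j hj b hb => ?_⟩
  · obtain ⟨hx₀, hx, hy₀, hy⟩ := hp
    simp only [Finset.mem_filter, Finset.mem_product, Finset.mem_Icc]
    exact ⟨⟨⟨hx₀, hx⟩, hy₀, hy⟩, free_image_hilbert_iff.2 ⟨⟨hx₀, hx, hy₀, hy⟩, hpB⟩⟩
  · exact segAvoidsCell_of_kingAdj (hw j hj).1 ((hwfree j hj.le).2 b hb).symm
      ((hwfree (j + 1) hj).2 b hb).symm

theorem hilbert_evade_at_most_two_blocked (N : ℕ) (hN : 1 ≤ N) (B : Finset ℕ)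
    (hcard : B.card ≤ 2) (hB : ∀ b ∈ B, b < 4 ^ N) (h0 : 0 ∉ B)
    (hlast : 4 ^ N - 1 ∉ B) :
    ∃ (m : ℕ) (w : ℕ → ℤ × ℤ), IsEvasionTour N B m w :=
  hilbert_evade_at_most_two_blocked_general N B hcard hB h0 hlast
end
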